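/- (Key identity for the interval-uncertainty max-regret reformulation.) Let c(u)_i = c_i⁰ + ĉ_i u_i with ĉ_i ≥ 0 for all i, and let x, y ∈ {0,1}^n. Let c̄_i = c_i⁰ + ĉ_i and c_i = c_i⁰ − ĉ_i denote upper and lower interval endpoints, and define (c_x)_i = c_i + x_i (c̄_i − c_i). Then max{ Σ_i c_i(u_i)(x_i − y_i) : −1 ≤ u_i ≤ 1 for all i } = c̄ᵀx − c_xᵀy. -/
import Mathlib


/-- Key identity for the interval-uncertainty max-regret
reformulation: `max_{‖u‖_∞ ≤ 1} ∑ cᵢ(uᵢ)(xᵢ − yᵢ) = c̄ᵀx − c_xᵀy`. -/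
theorem stmt13 (n : ℕ) (c0 chat : Fin n → ℝ) (hchat : ∀ i, 0 ≤ chat i)
    (x y : Fin n → ℝ) (hx : ∀ i, x i = 0 ∨ x i = 1) (hy : ∀ i, y i = 0 ∨ y i = 1) :
    IsGreatest
      {v : ℝ | ∃ u : Fin n → ℝ, (∀ i, |u i| ≤ 1) ∧
        v = ∑ i, (c0 i + chat i * u i) * (x i - y i)}
      ((∑ i, (c0 i + chat i) * x i) -
        ∑ i, ((c0 i - chat i) + x i * ((c0 i + chat i) - (c0 i - chat i))) * y i) := by
  constructor
  · refine ⟨fun i => x i - y i, fun i => ?_, ?_⟩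
    · rcases hx i with h1 | h1 <;> rcases hy i with h2 | h2 <;>
        simp [h1, h2]
    · rw [← Finset.sum_sub_distrib]
      refine Finset.sum_congr rfl fun i _ => ?_
      rcases hx i with h1 | h1 <;> rcases hy i with h2 | h2 <;>
        simp only [h1, h2] <;> ring
  · rintro v ⟨u, hu, rfl⟩
    rw [← Finset.sum_sub_distrib]
    refine Finset.sum_le_sum fun i _ => ?_
    have h := abs_le.mp (hu i)
    have hc := hchat i
    rcases hx i with h1 | h1 <;> rcases hy i with h2 | h2 <;>
      rw [h1, h2] <;> nlinarith [h.1, h.2]
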